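/- arXiv:math/0510367 — 3 statements merged into one kernel-verified Lean document; each statement's English description precedes it below -/
import Mathlib

section
/- Let A < B < 1, let f ∈ L¹([A,1]) and suppose f is Lipschitz continuous on [A,(B+1)/2]. For c ∈ [A,B] and x < c define v*(x) := ∫_c^1 f(t)/(t−x) dt. Then v*(x) = (f(c) + o(1)) · log(1/(c−x)) as x → c⁻, where the o(1) term depends only on c − x: that is, for every η > 0 there exists ρ > 0 such that for every c ∈ [A,B] and every x with 0 < c − x < ρ, one has |v*(x) − f(c)·log(1/(c−x))| ≤ η·log(1/(c−x)). -/
open Filter MeasureTheory Topology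

/-- Let `A < B < 1`, `f ∈ L¹([A,1])` Lipschitz on `[A,(B+1)/2]`. For
`c ∈ [A,B]` and `x < c` put `v*(x) = ∫_c^1 f(t)/(t-x) dt`. Then
`v*(x) = (f(c) + o(1)) log(1/(c-x))` as `x → c⁻`, the `o(1)` depending only on `c - x`:
for every `η > 0` there is `ρ > 0` such that for all `c ∈ [A,B]` and all `x` with
`0 < c - x < ρ`, `|v*(x) - f(c)·log(1/(c-x))| ≤ η·log(1/(c-x))`. -/
theorem log_asymptotics_of_cauchy_integral
    (A B : ℝ) (hAB : A < B) (hB1 : B < 1)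
    (f : ℝ → ℝ) (hfint : IntegrableOn f (Set.Icc A 1))
    (C : NNReal) (hfLip : LipschitzOnWith C f (Set.Icc A ((B + 1) / 2)))
    (η : ℝ) (hη : 0 < η) :
    ∃ ρ : ℝ, 0 < ρ ∧ ∀ c ∈ Set.Icc A B, ∀ x : ℝ, 0 < c - x → c - x < ρ →
      |(∫ t in Set.Icc c 1, f t / (t - x)) - f c * Real.log (1 / (c - x))|
        ≤ η * Real.log (1 / (c - x)) := by
  obtain ⟨δ, hδdef⟩ : ∃ δ : ℝ, δ = (1 - B) / 2 := ⟨_, rfl⟩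
  have hδ : (0:ℝ) < δ := by rw [hδdef]; linarith
  obtain ⟨M, hMdef⟩ : ∃ M : ℝ, M = ∫ t in Set.Icc A 1, |f t| := ⟨_, rfl⟩
  have hM : 0 ≤ M := hMdef ▸ integral_nonneg fun t => abs_nonneg _
  have hA2 : A ≤ (B + 1) / 2 := by linarith
  obtain ⟨K, hKdef⟩ : ∃ K : ℝ, K = |f A| + (C : ℝ) * ((B + 1) / 2 - A) := ⟨_, rfl⟩
  have hK : 0 ≤ K := hKdef ▸
    add_nonneg (abs_nonneg _) (mul_nonneg C.coe_nonneg (by linarith))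
  have hlog2 : 0 ≤ Real.log 2 := Real.log_nonneg one_le_two
  obtain ⟨E, hEdef⟩ : ∃ E : ℝ, E = (C : ℝ) * δ + M / δ + K * (|Real.log δ| + Real.log 2) := ⟨_, rfl⟩
  have hE : 0 ≤ E := by
    have h1 : 0 ≤ (C : ℝ) * δ := mul_nonneg C.coe_nonneg hδ.le
    have h2 : 0 ≤ M / δ := div_nonneg hM hδ.le
    have h3 : 0 ≤ K * (|Real.log δ| + Real.log 2) :=
      mul_nonneg hK (add_nonneg (abs_nonneg _) hlog2)
    linarith [hEdef]
  refine ⟨min δ (Real.exp (-(E / η))), lt_min hδ (Real.exp_pos _), ?_⟩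
  rintro c ⟨hAc, hcB⟩ x hu hρ
  have huδ : c - x < δ := lt_of_lt_of_le hρ (min_le_left _ _)
  have hue : c - x < Real.exp (-(E / η)) := lt_of_lt_of_le hρ (min_le_right _ _)
  have hxc : x < c := by linarith
  obtain ⟨m, hmdef⟩ : ∃ m : ℝ, m = c + δ := ⟨_, rfl⟩
  have hcm : c < m := by rw [hmdef]; linarith
  have hm2 : m ≤ (B + 1) / 2 := by rw [hmdef, hδdef]; linarith
  have hm1 : m < 1 := by linarith
  have hcmem : c ∈ Set.Icc A ((B + 1) / 2) := ⟨hAc, by linarith⟩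
  -- bound on |f c|
  have hfc : |f c| ≤ K := by
    have hd := hfLip.dist_le_mul c hcmem A ⟨le_refl A, hA2⟩
    rw [Real.dist_eq, Real.dist_eq] at hd
    have h1 : |f c| ≤ |f c - f A| + |f A| := by
      calc |f c| = |(f c - f A) + f A| := by ring_nf
      _ ≤ |f c - f A| + |f A| := abs_add_le _ _
    have h2 : |c - A| = c - A := abs_of_nonneg (by linarith)
    have h3 : (C : ℝ) * (c - A) ≤ (C : ℝ) * ((B + 1) / 2 - A) :=
      mul_le_mul_of_nonneg_left (by linarith) C.coe_nonneg
    rw [h2] at hd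
    rw [hKdef]; linarith
  -- continuity and integrability on [c, m]
  have hcont : ContinuousOn f (Set.Icc A ((B + 1) / 2)) := hfLip.continuousOn
  have hsub1 : Set.uIcc c m ⊆ Set.Icc A ((B + 1) / 2) := by
    rw [Set.uIcc_of_le hcm.le]
    exact Set.Icc_subset_Icc hAc hm2
  have hden : ∀ t ∈ Set.uIcc c m, t - x ≠ 0 := by
    intro t ht
    rw [Set.uIcc_of_le hcm.le] at ht
    have : c ≤ t := ht.1
    intro h; linarith [sub_eq_zero.mp h]
  have hcontden : ContinuousOn (fun t : ℝ => t - x) (Set.uIcc c m) :=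
    (continuous_id.sub continuous_const).continuousOn
  have int_fc : IntervalIntegrable (fun t => f t / (t - x)) volume c m :=
    (ContinuousOn.div (hcont.mono hsub1) hcontden hden).intervalIntegrable
  have int_c : IntervalIntegrable (fun t => f c / (t - x)) volume c m :=
    (ContinuousOn.div continuousOn_const hcontden hden).intervalIntegrable
  -- integrability on [m, 1]
  have hsub2 : Set.Ioc m 1 ⊆ Set.Icc A 1 := by
    intro t ht
    exact ⟨by linarith [ht.1], ht.2⟩
  have hf' : IntegrableOn f (Set.Ioc m 1) := hfint.mono_set hsub2
  have hgδ : Integrable (fun t => |f t| / δ) (volume.restrict (Set.Ioc m 1)) :=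
    hf'.abs.div_const δ
  have hint_m1 : IntegrableOn (fun t => f t / (t - x)) (Set.Ioc m 1) := by
    have hmeas : AEStronglyMeasurable (fun t => f t / (t - x))
        (volume.restrict (Set.Ioc m 1)) := by
      simp only [div_eq_mul_inv]
      exact hf'.aestronglyMeasurable.mul
        ((measurable_id.sub_const x).inv).aestronglyMeasurable
    apply Integrable.mono' hgδ hmeas
    · filter_upwards [ae_restrict_mem measurableSet_Ioc] with t ht
      have h1 : δ ≤ t - x := by
        have := ht.1; rw [hmdef] at this; linarith
      have h2 : (0:ℝ) < t - x := lt_of_lt_of_le hδ h1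
      rw [Real.norm_eq_abs, abs_div, abs_of_pos h2]
      exact div_le_div_of_nonneg_left (abs_nonneg _) hδ h1
  have int_m1 : IntervalIntegrable (fun t => f t / (t - x)) volume m 1 :=
    (intervalIntegrable_iff_integrableOn_Ioc_of_le hm1.le).mpr hint_m1
  -- split the integral
  have hsplit : ∫ t in c..1, f t / (t - x)
      = (∫ t in c..m, f t / (t - x)) + ∫ t in m..1, f t / (t - x) :=
    (intervalIntegral.integral_add_adjacent_intervals int_fc int_m1).symm
  -- explicit log integral
  have hmx : (0:ℝ) < m - x := by linarith
  have hT2 : ∫ t in c..m, f c / (t - x)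
      = f c * (Real.log (m - x) - Real.log (c - x)) := by
    have h0 : ∫ t in c..m, ((t : ℝ) - x)⁻¹ = Real.log ((m - x) / (c - x)) := by
      rw [intervalIntegral.integral_comp_sub_right (fun u => u⁻¹) x]
      apply integral_inv
      rw [Set.uIcc_of_le (by linarith : c - x ≤ m - x)]
      rintro ⟨h1, -⟩; linarith
    calc ∫ t in c..m, f c / (t - x) = ∫ t in c..m, f c * (t - x)⁻¹ := by
          simp [div_eq_mul_inv]
    _ = f c * ∫ t in c..m, ((t:ℝ) - x)⁻¹ := intervalIntegral.integral_const_mul _ _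
    _ = f c * Real.log ((m - x) / (c - x)) := by rw [h0]
    _ = f c * (Real.log (m - x) - Real.log (c - x)) := by
          rw [Real.log_div (ne_of_gt hmx) (ne_of_gt hu)]
  -- main identity
  have key : (∫ t in Set.Icc c 1, f t / (t - x)) - f c * Real.log (1 / (c - x))
      = (∫ t in c..m, (f t - f c) / (t - x)) + f c * Real.log (m - x)
        + ∫ t in m..1, f t / (t - x) := by
    have hIcc : ∫ t in Set.Icc c 1, f t / (t - x) = ∫ t in c..1, f t / (t - x) := by
      rw [intervalIntegral.integral_of_le (by linarith : c ≤ 1),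
        integral_Icc_eq_integral_Ioc]
    have hdiff : ∫ t in c..m, (f t - f c) / (t - x)
        = (∫ t in c..m, f t / (t - x)) - ∫ t in c..m, f c / (t - x) := by
      rw [← intervalIntegral.integral_sub int_fc int_c]
      congr 1; ext t; ring
    have hloginv : Real.log (1 / (c - x)) = -Real.log (c - x) := by
      rw [one_div, Real.log_inv]
    rw [hIcc, hsplit, hdiff, hT2, hloginv]; ring
  -- bound 1 : Lipschitz part
  have hb1 : |∫ t in c..m, (f t - f c) / (t - x)| ≤ (C : ℝ) * δ := by
    have h := intervalIntegral.norm_integral_le_of_norm_le_const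
      (C := (C : ℝ)) (f := fun t => (f t - f c) / (t - x)) (a := c) (b := m) ?_
    · rw [Real.norm_eq_abs] at h
      have : |m - c| = δ := by rw [hmdef]; simp [abs_of_pos hδ]
      rwa [this] at h
    · intro t ht
      rw [Set.uIoc_of_le hcm.le] at ht
      have htc : c < t := ht.1
      have htm : t ≤ m := ht.2
      have htmem : t ∈ Set.Icc A ((B + 1) / 2) := ⟨by linarith, le_trans htm hm2⟩
      have hlip := hfLip.dist_le_mul t htmem c hcmem
      rw [Real.dist_eq, Real.dist_eq] at hlip
      have h2 : |t - c| = t - c := abs_of_nonneg (by linarith)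
      rw [h2] at hlip
      have htx : (0:ℝ) < t - x := by linarith
      rw [Real.norm_eq_abs, abs_div, abs_of_pos htx, div_le_iff₀ htx]
      calc |f t - f c| ≤ (C : ℝ) * (t - c) := hlip
      _ ≤ (C : ℝ) * (t - x) := mul_le_mul_of_nonneg_left (by linarith) C.coe_nonneg
  -- bound 2 : log part
  have hb2 : |f c * Real.log (m - x)| ≤ K * (|Real.log δ| + Real.log 2) := by
    have hmxeq : m - x = δ + (c - x) := by rw [hmdef]; ring
    have hlogb : |Real.log (m - x)| ≤ |Real.log δ| + Real.log 2 := by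
      rw [hmxeq]
      refine abs_le.mpr ⟨?_, ?_⟩
      · have h1 : Real.log δ ≤ Real.log (δ + (c - x)) :=
          Real.log_le_log hδ (by linarith)
        have h2 : -|Real.log δ| ≤ Real.log δ := neg_abs_le _
        linarith
      · have h1 : Real.log (δ + (c - x)) ≤ Real.log (2 * δ) :=
          Real.log_le_log (by linarith) (by linarith)
        rw [Real.log_mul two_ne_zero (ne_of_gt hδ)] at h1
        have h2 : Real.log δ ≤ |Real.log δ| := le_abs_self _
        linarith
    rw [abs_mul]
    exact mul_le_mul hfc hlogb (abs_nonneg _) hK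
  -- bound 3 : tail part
  have hb3 : |∫ t in m..1, f t / (t - x)| ≤ M / δ := by
    rw [intervalIntegral.integral_of_le hm1.le]
    calc |∫ t in Set.Ioc m 1, f t / (t - x)|
        ≤ ∫ t in Set.Ioc m 1, |f t| / |t - x| := by
          simpa [Real.norm_eq_abs] using norm_integral_le_integral_norm
            (μ := volume.restrict (Set.Ioc m 1)) (fun t => f t / (t - x))
    _ ≤ ∫ t in Set.Ioc m 1, |f t| / δ := by
          have habs : Integrable (fun t => |f t| / |t - x|)
              (volume.restrict (Set.Ioc m 1)) := by
            have := hint_m1.abs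
            simpa [abs_div] using this
          apply integral_mono_ae habs hgδ
          filter_upwards [ae_restrict_mem measurableSet_Ioc] with t ht
          have h1 : δ ≤ t - x := by
            have := ht.1; rw [hmdef] at this; linarith
          have h2 : (0:ℝ) < t - x := lt_of_lt_of_le hδ h1
          rw [abs_of_pos h2]
          exact div_le_div_of_nonneg_left (abs_nonneg _) hδ h1
    _ ≤ ∫ t in Set.Icc A 1, |f t| / δ := by
          apply setIntegral_mono_set (hfint.abs.div_const δ)
          · filter_upwards with t using div_nonneg (abs_nonneg _) hδ.le
          · exact HasSubset.Subset.eventuallyLE hsub2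
    _ = M / δ := by rw [hMdef, integral_div]
  -- conclusion
  have hlogu : E / η ≤ Real.log (1 / (c - x)) := by
    have h1 : Real.log (c - x) < -(E / η) := by
      have := Real.log_lt_log hu hue
      rwa [Real.log_exp] at this
    rw [one_div, Real.log_inv]; linarith
  have hEη : E ≤ η * Real.log (1 / (c - x)) := by
    rw [div_le_iff₀ hη] at hlogu
    linarith [hlogu]
  calc |(∫ t in Set.Icc c 1, f t / (t - x)) - f c * Real.log (1 / (c - x))|
      = |(∫ t in c..m, (f t - f c) / (t - x)) + f c * Real.log (m - x)
          + ∫ t in m..1, f t / (t - x)| := by rw [key]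
  _ ≤ |(∫ t in c..m, (f t - f c) / (t - x)) + f c * Real.log (m - x)|
        + |∫ t in m..1, f t / (t - x)| := abs_add_le _ _
  _ ≤ |∫ t in c..m, (f t - f c) / (t - x)| + |f c * Real.log (m - x)|
        + |∫ t in m..1, f t / (t - x)| := by
        have := abs_add_le (∫ t in c..m, (f t - f c) / (t - x))
          (f c * Real.log (m - x))
        linarith
  _ ≤ (C : ℝ) * δ + K * (|Real.log δ| + Real.log 2) + M / δ := by linarith
  _ = E := by rw [hEdef]; ring
  _ ≤ η * Real.log (1 / (c - x)) := hEη
end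

section
/- Let R be an interval and let F, G, H be functions on R, nonnegative almost everywhere, with F(x) = G(x) − H(x) a.e., such that G and H have smooth integrals on R, H(x) ≤ (1−η)G(x) a.e. on R for some η ∈ (0,1), and such that there exists ℓ₀ > 0 with the property that for every subinterval I ⊆ R of length at most ℓ₀, ∫_I F = 0 implies ∫_I G = ∫_I H = 0. Then F has smooth integral on R. -/
open Filter MeasureTheory Topology

/-- A function `f` has *smooth integral* on `R`: `f ≥ 0` a.e. on `R`, and for every `η > 0`
there is `ε₀ > 0` such that for any two adjacent subintervals `I = [u-ε, u]`, `J = [u, u+ε]`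
of `R` of common length `ε < ε₀`, `|∫_I f - ∫_J f| ≤ η ∫_J f` and `|∫_I f - ∫_J f| ≤ η ∫_I f`. -/
def HasSmoothIntegralOn (f : ℝ → ℝ) (R : Set ℝ) : Prop :=
  (∀ᵐ x ∂(volume.restrict R), 0 ≤ f x) ∧
  ∀ η : ℝ, 0 < η → ∃ ε₀ : ℝ, 0 < ε₀ ∧ ∀ u ε : ℝ, 0 < ε → ε < ε₀ →
    Set.Icc (u - ε) (u + ε) ⊆ R →
    |(∫ x in u - ε..u, f x) - ∫ x in u..u + ε, f x| ≤ η * (∫ x in u..u + ε, f x) ∧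
    |(∫ x in u - ε..u, f x) - ∫ x in u..u + ε, f x| ≤ η * (∫ x in u - ε..u, f x)

/-- Let `R` be an interval and `F = G - H` a.e. on `R`, where `F, G, H` are
a.e. nonnegative and locally integrable on `R`, `G` and `H` have smooth integrals on `R`,
`H ≤ (1-η)G` a.e. on `R` for some `η ∈ (0,1)`, and `∫_I F = 0` forces `∫_I G = ∫_I H = 0` for
all subintervals `I ⊆ R` of length at most `ℓ₀`. Then `F` has smooth integral on `R`. -/
theorem difference_has_smooth_integral
    (R : Set ℝ) (hR : R.OrdConnected)
    (F G H : ℝ → ℝ)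
    (hFloc : ∀ u v : ℝ, Set.Icc u v ⊆ R → IntegrableOn F (Set.Icc u v))
    (hGloc : ∀ u v : ℝ, Set.Icc u v ⊆ R → IntegrableOn G (Set.Icc u v))
    (hHloc : ∀ u v : ℝ, Set.Icc u v ⊆ R → IntegrableOn H (Set.Icc u v))
    (hFnn : ∀ᵐ x ∂(volume.restrict R), 0 ≤ F x)
    (hGnn : ∀ᵐ x ∂(volume.restrict R), 0 ≤ G x)
    (hHnn : ∀ᵐ x ∂(volume.restrict R), 0 ≤ H x)
    (hFGH : ∀ᵐ x ∂(volume.restrict R), F x = G x - H x)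
    (hG : HasSmoothIntegralOn G R) (hH : HasSmoothIntegralOn H R)
    (η : ℝ) (hη0 : 0 < η) (hη1 : η < 1)
    (hHG : ∀ᵐ x ∂(volume.restrict R), H x ≤ (1 - η) * G x)
    (ℓ₀ : ℝ) (hℓ₀ : 0 < ℓ₀)
    (hzero : ∀ u v : ℝ, u ≤ v → v - u ≤ ℓ₀ → Set.Icc u v ⊆ R →
      (∫ x in u..v, F x) = 0 → (∫ x in u..v, G x) = 0 ∧ (∫ x in u..v, H x) = 0) :
    HasSmoothIntegralOn F R := by
  obtain ⟨hGnn', hGsm⟩ := hG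
  obtain ⟨hHnn', hHsm⟩ := hH
  refine ⟨hFnn, ?_⟩
  intro δ hδ
  obtain ⟨ε₁, hε₁, hGsp⟩ := hGsm (δ * η / 2) (by positivity)
  obtain ⟨ε₂, hε₂, hHsp⟩ := hHsm (δ * η / 2) (by positivity)
  refine ⟨min ε₁ ε₂, lt_min hε₁ hε₂, ?_⟩
  intro u ε hε hεlt hsub
  have key : ∀ a b : ℝ, a ≤ b → Set.Icc a b ⊆ R →
      (∫ x in a..b, F x) = (∫ x in a..b, G x) - (∫ x in a..b, H x) ∧
      (∫ x in a..b, H x) ≤ (1 - η) * (∫ x in a..b, G x) ∧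
      0 ≤ ∫ x in a..b, G x := by
    intro a b hab hs
    have hIoc : Set.Ioc a b ⊆ R := Set.Ioc_subset_Icc_self.trans hs
    have hgi : IntegrableOn G (Set.Ioc a b) := (hGloc a b hs).mono_set Set.Ioc_subset_Icc_self
    have hhi : IntegrableOn H (Set.Ioc a b) := (hHloc a b hs).mono_set Set.Ioc_subset_Icc_self
    have haeF : ∀ᵐ x ∂(volume.restrict (Set.Ioc a b)), F x = G x - H x :=
      ae_restrict_of_ae_restrict_of_subset hIoc hFGH
    have haeHG : ∀ᵐ x ∂(volume.restrict (Set.Ioc a b)), H x ≤ (1 - η) * G x :=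
      ae_restrict_of_ae_restrict_of_subset hIoc hHG
    have haeG : ∀ᵐ x ∂(volume.restrict (Set.Ioc a b)), 0 ≤ G x :=
      ae_restrict_of_ae_restrict_of_subset hIoc hGnn'
    rw [intervalIntegral.integral_of_le hab, intervalIntegral.integral_of_le hab,
        intervalIntegral.integral_of_le hab]
    refine ⟨?_, ?_, ?_⟩
    · rw [integral_congr_ae haeF, integral_sub hgi hhi]
    · calc (∫ x in Set.Ioc a b, H x) ≤ ∫ x in Set.Ioc a b, (1 - η) * G x :=
            integral_mono_ae hhi (hgi.const_mul _) haeHG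
        _ = (1 - η) * ∫ x in Set.Ioc a b, G x := integral_const_mul _ _
    · exact integral_nonneg_of_ae haeG
  have hsub1 : Set.Icc (u - ε) u ⊆ R := fun x hx => hsub ⟨hx.1, hx.2.trans (by linarith)⟩
  have hsub2 : Set.Icc u (u + ε) ⊆ R := fun x hx => hsub ⟨le_trans (by linarith) hx.1, hx.2⟩
  obtain ⟨keqI, khI, kgI⟩ := key (u - ε) u (by linarith) hsub1
  obtain ⟨keqJ, khJ, kgJ⟩ := key u (u + ε) (by linarith) hsub2
  obtain ⟨hG1, hG2⟩ := hGsp u ε hε (hεlt.trans_le (min_le_left _ _)) hsub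
  obtain ⟨hH1, hH2⟩ := hHsp u ε hε (hεlt.trans_le (min_le_right _ _)) hsub
  rw [keqI, keqJ]
  have habs : |((∫ x in u - ε..u, G x) - (∫ x in u - ε..u, H x)) -
      ((∫ x in u..u + ε, G x) - (∫ x in u..u + ε, H x))| ≤
      |(∫ x in u - ε..u, G x) - (∫ x in u..u + ε, G x)| +
      |(∫ x in u - ε..u, H x) - (∫ x in u..u + ε, H x)| := by
    rw [show ((∫ x in u - ε..u, G x) - (∫ x in u - ε..u, H x)) -
        ((∫ x in u..u + ε, G x) - (∫ x in u..u + ε, H x)) =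
        ((∫ x in u - ε..u, G x) - (∫ x in u..u + ε, G x)) -
        ((∫ x in u - ε..u, H x) - (∫ x in u..u + ε, H x)) by ring]
    exact abs_sub _ _
  constructor
  · refine habs.trans ?_
    nlinarith [mul_le_mul_of_nonneg_left khJ (by positivity : (0:ℝ) ≤ δ * η / 2),
      mul_le_mul_of_nonneg_left khJ hδ.le,
      mul_nonneg (mul_nonneg hδ.le (mul_nonneg hη0.le hη0.le)) kgJ]
  · refine habs.trans ?_
    nlinarith [mul_le_mul_of_nonneg_left khI (by positivity : (0:ℝ) ≤ δ * η / 2),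
      mul_le_mul_of_nonneg_left khI hδ.le,
      mul_nonneg (mul_nonneg hδ.le (mul_nonneg hη0.le hη0.le)) kgI]
end

section
/- Let R ⊆ ℝ be an interval, T ⊆ ℝ a Borel set, and ν a finite positive Borel measure on T. Let {v_t : t ∈ T} be a family of functions with uniformly smooth integral on R such that (t,x) ↦ v_t(x) is measurable, t ↦ v_t(x) is ν-integrable for a.e. x ∈ R, and the function v(x) := ∫_T v_t(x) dν(t) is locally integrable on R. Then v has smooth integral on R. -/
open Filter MeasureTheory Topology

section

variable {α β : Type*} [MeasurableSpace α] [MeasurableSpace β] {μ : Measure α} {ν : Measure β}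

theorem integrable_uncurry_of_ae_nonneg [SFinite ν] {f : α → β → ℝ}
    (hf : AEStronglyMeasurable (Function.uncurry f) (μ.prod ν))
    (hnn : ∀ᵐ x ∂μ, ∀ᵐ y ∂ν, 0 ≤ f x y) (hint : ∀ᵐ x ∂μ, Integrable (f x) ν)
    (hI : Integrable (fun x => ∫ y, f x y ∂ν) μ) :
    Integrable (Function.uncurry f) (μ.prod ν) := by
  refine (integrable_prod_iff hf).2 ⟨hint, hI.congr ?_⟩
  filter_upwards [hnn] with x hx
  exact integral_congr_ae (hx.mono fun y hy => (Real.norm_of_nonneg hy).symm)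

theorem abs_integral_sub_integral_le_mul_integral {f g h : α → ℝ} {η : ℝ}
    (hf : Integrable f μ) (hg : Integrable g μ) (hh : Integrable h μ)
    (hfg : ∀ᵐ x ∂μ, |f x - g x| ≤ η * h x) :
    |∫ x, f x ∂μ - ∫ x, g x ∂μ| ≤ η * ∫ x, h x ∂μ := by
  rw [← integral_sub hf hg, ← integral_const_mul]
  exact (abs_integral_le_integral_abs).trans
    (integral_mono_ae (hf.sub hg).abs (hh.const_mul η) hfg)

end

theorem integrable_intervalIntegral_of_integrable_uncurry {β : Type*} [MeasurableSpace β]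
    {ν : Measure β} [SFinite ν] {f : ℝ → β → ℝ} {a b : ℝ}
    (hf : Integrable (Function.uncurry f) ((volume.restrict (Set.uIoc a b)).prod ν)) :
    Integrable (fun y => ∫ x in a..b, f x y) ν := by
  simp_rw [intervalIntegral.intervalIntegral_eq_integral_uIoc]
  exact hf.integral_prod_right.smul (if a ≤ b then (1 : ℝ) else -1)

theorem integral_of_family_has_smooth_integral_general
    (R : Set ℝ)
    (T : Set ℝ) (hT : MeasurableSet T)
    (ν : Measure ℝ) [IsFiniteMeasure ν]
    (v : ℝ → ℝ → ℝ)
    (hmeas : Measurable (Function.uncurry v))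
    (hnn : ∀ t ∈ T, ∀ᵐ x ∂(volume.restrict R), 0 ≤ v t x)
    (husi : ∀ η : ℝ, 0 < η → ∃ ε₀ : ℝ, 0 < ε₀ ∧ ∀ t ∈ T, ∀ u ε : ℝ, 0 < ε → ε < ε₀ →
      Set.Icc (u - ε) (u + ε) ⊆ R →
      |(∫ x in u - ε..u, v t x) - ∫ x in u..u + ε, v t x| ≤ η * (∫ x in u..u + ε, v t x) ∧
      |(∫ x in u - ε..u, v t x) - ∫ x in u..u + ε, v t x| ≤ η * (∫ x in u - ε..u, v t x))
    (hint : ∀ᵐ x ∂(volume.restrict R), IntegrableOn (fun t => v t x) T ν)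
    (hloc : ∀ u w : ℝ, Set.Icc u w ⊆ R →
      IntegrableOn (fun x => ∫ t in T, v t x ∂ν) (Set.Icc u w)) :
    HasSmoothIntegralOn (fun x => ∫ t in T, v t x ∂ν) R := by
  have hnn' : ∀ᵐ x ∂(volume.restrict R), ∀ᵐ t ∂(ν.restrict T), 0 ≤ v t x :=
    (Measure.ae_ae_comm (p := fun t x => 0 ≤ v t x)
      (measurableSet_le measurable_const hmeas)).1 ((ae_restrict_mem hT).mono hnn)
  have hprod : ∀ a b, a ≤ b → Set.Icc a b ⊆ R → Integrable (Function.uncurry fun x t => v t x)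
      ((volume.restrict (Set.uIoc a b)).prod (ν.restrict T)) := fun a b hab hab_sub => by
    have hsub : Set.Ioc a b ⊆ R := Set.Ioc_subset_Icc_self.trans hab_sub
    rw [Set.uIoc_of_le hab]
    exact integrable_uncurry_of_ae_nonneg (hmeas.comp measurable_swap).aestronglyMeasurable
      (ae_restrict_of_ae_restrict_of_subset hsub hnn')
      (ae_restrict_of_ae_restrict_of_subset hsub hint)
      ((hloc a b hab_sub).mono_set Set.Ioc_subset_Icc_self)
  refine ⟨hnn'.mono fun x hx => integral_nonneg_of_ae hx, fun η hη => ?_⟩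
  obtain ⟨ε₀, hε₀, hv⟩ := husi η hη
  refine ⟨ε₀, hε₀, fun u ε hε hεε₀ hsub => ?_⟩
  have hI := hprod (u - ε) u (by linarith) ((Set.Icc_subset_Icc_right (by linarith)).trans hsub)
  have hJ := hprod u (u + ε) (by linarith) ((Set.Icc_subset_Icc_left (by linarith)).trans hsub)
  have hIi := integrable_intervalIntegral_of_integrable_uncurry hI
  have hJi := integrable_intervalIntegral_of_integrable_uncurry hJ
  have hae := (ae_restrict_mem (μ := ν) hT).mono fun t ht => hv t ht u ε hε hεε₀ hsub
  rw [intervalIntegral_integral_swap hI, intervalIntegral_integral_swap hJ]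
  exact ⟨abs_integral_sub_integral_le_mul_integral hIi hJi hJi (hae.mono fun _ h => h.1),
    abs_integral_sub_integral_le_mul_integral hIi hJi hIi (hae.mono fun _ h => h.2)⟩

/-- Let `R` be an interval, `T` a Borel set, `ν` a finite positive Borel
measure, and `{v_t : t ∈ T}` a family with uniformly smooth integral on `R` such that
`(t,x) ↦ v_t(x)` is measurable, `t ↦ v_t(x)` is `ν`-integrable on `T` for a.e. `x ∈ R`, and
`v(x) := ∫_T v_t(x) dν(t)` is locally integrable on `R`. Then `v` has smooth integral on `R`. -/
theorem integral_of_family_has_smooth_integral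
    (R : Set ℝ) (hR : R.OrdConnected)
    (T : Set ℝ) (hT : MeasurableSet T)
    (ν : Measure ℝ) [IsFiniteMeasure ν]
    (v : ℝ → ℝ → ℝ)
    (hmeas : Measurable (Function.uncurry v))
    (hnn : ∀ t ∈ T, ∀ᵐ x ∂(volume.restrict R), 0 ≤ v t x)
    (husi : ∀ η : ℝ, 0 < η → ∃ ε₀ : ℝ, 0 < ε₀ ∧ ∀ t ∈ T, ∀ u ε : ℝ, 0 < ε → ε < ε₀ →
      Set.Icc (u - ε) (u + ε) ⊆ R →
      |(∫ x in u - ε..u, v t x) - ∫ x in u..u + ε, v t x| ≤ η * (∫ x in u..u + ε, v t x) ∧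
      |(∫ x in u - ε..u, v t x) - ∫ x in u..u + ε, v t x| ≤ η * (∫ x in u - ε..u, v t x))
    (hint : ∀ᵐ x ∂(volume.restrict R), IntegrableOn (fun t => v t x) T ν)
    (hloc : ∀ u w : ℝ, Set.Icc u w ⊆ R →
      IntegrableOn (fun x => ∫ t in T, v t x ∂ν) (Set.Icc u w)) :
    HasSmoothIntegralOn (fun x => ∫ t in T, v t x ∂ν) R :=
  integral_of_family_has_smooth_integral_general R T hT ν v hmeas hnn husi hint hloc
end
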